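/- arXiv:1211.6100 — 4 statements merged into one kernel-verified Lean document; each statement's English description precedes it below -/
import Mathlib

section
/- For parameters p, q with pq(p−q) ≠ 0 and distinct positive reals x ≠ y, the Stolarsky mean S_{p,q}(x,y) = (q(x^p − y^p)/(p(x^q − y^q)))^{1/(p−q)} satisfies min(x,y) < S_{p,q}(x,y) < max(x,y). -/
open Real

noncomputable def S (p q x y : ℝ) : ℝ :=
  (q * (x ^ p - y ^ p) / (p * (x ^ q - y ^ q))) ^ (1 / (p - q))

open Set

/-!
Cauchy's mean value theorem for `t ↦ t ^ p` and `t ↦ t ^ q` on `[y, x]` gives `c ∈ (y, x)` with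
`q (x^p - y^p) / (p (x^q - y^q)) = c^(p-1) / c^(q-1) = c^(p-q)`, so `S p q x y = c`.
-/

lemma S_comm (p q x y : ℝ) : S p q x y = S p q y x := by
  rw [S, S, ← neg_sub (y ^ p), ← neg_sub (y ^ q), mul_neg, mul_neg, neg_div_neg_eq]

lemma exists_mem_Ioo_rpow_sub_mul_eq (p q : ℝ) {a b : ℝ} (ha : 0 < a) (hab : a < b) :
    ∃ c ∈ Ioo a b, (b ^ q - a ^ q) * (p * c ^ (p - 1)) = (b ^ p - a ^ p) * (q * c ^ (q - 1)) := by
  have hcont (r : ℝ) : ContinuousOn (fun t : ℝ => t ^ r) (Icc a b) :=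
    continuousOn_id.rpow_const fun t ht => Or.inl (ha.trans_le ht.1).ne'
  have hderiv (r : ℝ) : ∀ t ∈ Ioo a b, HasDerivAt (fun s : ℝ => s ^ r) (r * t ^ (r - 1)) t :=
    fun t ht => hasDerivAt_rpow_const (Or.inl (ha.trans ht.1).ne')
  exact exists_ratio_hasDerivAt_eq_ratio_slope _ _ hab (hcont p) (hderiv p) _ _ (hcont q) (hderiv q)

lemma S_eq_of_rpow_sub_mul_eq {p q a b c : ℝ} (hp : p ≠ 0) (hpq : p ≠ q) (hc : 0 < c)
    (hba : b ^ q ≠ a ^ q)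
    (h : (b ^ q - a ^ q) * (p * c ^ (p - 1)) = (b ^ p - a ^ p) * (q * c ^ (q - 1))) :
    S p q b a = c := by
  have hratio : q * (b ^ p - a ^ p) / (p * (b ^ q - a ^ q)) = c ^ (p - q) := by
    rw [show p - q = (p - 1) - (q - 1) by ring, rpow_sub hc,
      div_eq_div_iff (mul_ne_zero hp (sub_ne_zero.mpr hba)) (rpow_pos_of_pos hc _).ne']
    linear_combination -h
  rw [S, hratio, one_div, rpow_rpow_inv hc.le (sub_ne_zero.mpr hpq)]

lemma S_mem_Ioo {p q x y : ℝ} (hp : p ≠ 0) (hq : q ≠ 0) (hpq : p ≠ q) (hy : 0 < y) (hyx : y < x) :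
    S p q x y ∈ Ioo y x := by
  obtain ⟨c, hc, hcauchy⟩ := exists_mem_Ioo_rpow_sub_mul_eq p q hy hyx
  have hxy : x ^ q ≠ y ^ q := fun h => hyx.ne' (rpow_left_injOn hq (hy.trans hyx).le hy.le h)
  rwa [S_eq_of_rpow_sub_mul_eq hp hpq (hy.trans hc.1) hxy hcauchy]

theorem stolarsky_strict_mean (p q x y : ℝ) (hpq : p * q * (p - q) ≠ 0)
    (hx : 0 < x) (hy : 0 < y) (hxy : x ≠ y) :
    min x y < S p q x y ∧ S p q x y < max x y := by
  have hp : p ≠ 0 := fun h => hpq (by simp [h])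
  have hq : q ≠ 0 := fun h => hpq (by simp [h])
  have hne : p ≠ q := fun h => hpq (by simp [h])
  rcases hxy.lt_or_gt with hlt | hgt
  · rw [min_eq_left hlt.le, max_eq_right hlt.le, S_comm]
    exact S_mem_Ioo hp hq hne hx hlt
  · rw [min_eq_right hgt.le, max_eq_left hgt.le]
    exact S_mem_Ioo hp hq hne hy hgt
end

section
/- Define E(p,q,u,v) := (log L(pu,pv) − log L(qu,qv))/(p−q) for p ≠ q, where L(u,v) := Σ_{n≥1}(u^{n-1}+⋯+v^{n-1})/n!. Then for pq(p−q) ≠ 0 and u ≠ v, E(p,q,u,v) = log S_{p,q}(e^u, e^v). -/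
open Real

noncomputable def L (u v : ℝ) : ℝ :=
  ∑' n : ℕ, (∑ i ∈ Finset.range (n + 1), u ^ (n - i) * v ^ i) / (Nat.factorial (n + 1) : ℝ)

noncomputable def E (p q u v : ℝ) : ℝ :=
  (Real.log (L (p * u) (p * v)) - Real.log (L (q * u) (q * v))) / (p - q)

/-!
Summing the geometric sums termwise against the exponential series gives
`L u v * (u - v) = exp u - exp v`, i.e. `L u v` is the slope of `exp` between `v` and `u`, which is
positive. Hence `exp u ^ c - exp v ^ c = c * (u - v) * L (c * u) (c * v)`, so the quantity under the
root in `S p q (exp u) (exp v)` is `L (p * u) (p * v) / L (q * u) (q * v)`, and taking logarithms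
gives `E`.
-/

open Finset Nat

lemma sum_range_succ_pow_mul_pow_mul_sub {R : Type*} [CommRing R] (x y : R) (n : ℕ) :
    (∑ i ∈ range (n + 1), x ^ (n - i) * y ^ i) * (x - y) = x ^ (n + 1) - y ^ (n + 1) := by
  have h := geom_sum₂_mul x y (n + 1)
  rw [geom_sum₂_comm] at h
  simpa [mul_comm] using h

lemma hasSum_pow_succ_div_factorial (x : ℝ) :
    HasSum (fun n : ℕ => x ^ (n + 1) / (n + 1)!) (exp x - 1) := by
  simpa [exp_eq_exp_ℝ] using
    (hasSum_nat_add_iff' 1).mpr (NormedSpace.expSeries_div_hasSum_exp x)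

lemma L_eq_slope {u v : ℝ} (h : u ≠ v) : L u v = slope exp v u := by
  have hsum := ((hasSum_pow_succ_div_factorial u).sub
    (hasSum_pow_succ_div_factorial v)).div_const (u - v)
  rw [sub_sub_sub_cancel_right] at hsum
  rw [slope_def_field, L, ← hsum.tsum_eq]
  refine tsum_congr fun n => ?_
  rw [eq_div_iff (sub_ne_zero.mpr h), div_mul_eq_mul_div, sum_range_succ_pow_mul_pow_mul_sub]
  ring

lemma L_pos {u v : ℝ} (h : u ≠ v) : 0 < L u v :=
  L_eq_slope h ▸
    (exp_strictMono.strictMonoOn Set.univ).slope_pos (Set.mem_univ v) (Set.mem_univ u) h.symm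

lemma exp_rpow_sub_exp_rpow (c u v : ℝ) :
    exp u ^ c - exp v ^ c = c * (u - v) * L (c * u) (c * v) := by
  rcases eq_or_ne (c * u) (c * v) with h | h
  · rw [← exp_mul, ← exp_mul, mul_comm u, mul_comm v, h, sub_self, mul_sub, h, sub_self, zero_mul]
  · have hne : c * (u - v) ≠ 0 := by rwa [mul_sub, sub_ne_zero]
    rw [L_eq_slope h, slope_def_field, ← exp_mul, ← exp_mul, mul_comm u, mul_comm v, ← mul_sub,
      mul_div_cancel₀ _ hne]

theorem E_eq_log_S (p q u v : ℝ) (hpq : p * q * (p - q) ≠ 0) (huv : u ≠ v) :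
    E p q u v = Real.log (S p q (Real.exp u) (Real.exp v)) := by
  have hp : p ≠ 0 := left_ne_zero_of_mul (left_ne_zero_of_mul hpq)
  have hq : q ≠ 0 := right_ne_zero_of_mul (left_ne_zero_of_mul hpq)
  have hLp := L_pos (mul_right_injective₀ hp |>.ne huv)
  have hLq := L_pos (mul_right_injective₀ hq |>.ne huv)
  have hratio : q * (exp u ^ p - exp v ^ p) / (p * (exp u ^ q - exp v ^ q))
      = L (p * u) (p * v) / L (q * u) (q * v) := by
    rw [exp_rpow_sub_exp_rpow, exp_rpow_sub_exp_rpow]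
    field_simp
  rw [E, S, hratio, log_rpow (div_pos hLp hLq), log_div hLp.ne' hLq.ne']
  ring
end

section
/- Suppose a, b, c, d ∈ ℝ with ab(a−b) ≠ 0 and cd(c−d) ≠ 0, {a,b} ≠ {2,1} or {c,d} ≠ {2,1}. Then the Matkowski–Sutô equation S_{a,b}(x,y) + S_{c,d}(x,y) = x + y fails for some positive x, y. Equivalently: S_{a,b}(x,y) + S_{c,d}(x,y) = x + y holds for all positive x, y iff {a,b} = {c,d} = {2,1}. -/
open Real

/-- The Stolarsky mean extended to the diagonal by S(x,x) = x. -/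
noncomputable def Sfull (p q x y : ℝ) : ℝ :=
  if x = y then x else S p q x y

/-!
Put `x = 1`, `y = t` and let `t → 0⁺`. For `0 < q < p` one has
`S_{p,q}(1,t) = α (1 + w)^{1/(p-q)}` with `α = (q/p)^{1/(p-q)}` and `w ~ t^q`, while
`S_{p,q}(1,t) → 0` when `q < 0`. Normalise to `b < a`, `d < c`, `b ≤ d` and compare both sides
of `S_{a,b}(1,t) + S_{c,d}(1,t) = 1 + t` order by order: the constant terms force `b > 0` and
`α_{a,b} + α_{c,d} = 1`, the terms of order `t^b` force `b = 1`. The second-order remainder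
`S_{p,1}(1,t) - α - α t/(p-1)` vanishes for `p = 2`, behaves like `-α t^p/(p-1)` for `p < 2`
and like a positive multiple of `t²` for `p > 2`; matching it against the other mean forces
`a = c = 2`, `d = 1`. The only configuration where the leading terms can cancel,
`1 < a = d < 2`, `c = 2`, makes the binary entropy of `a - 1` equal to `log 2`, so `a = 3/2`,
which fails by direct evaluation.
-/

open Filter Set Topology

lemma tendsto_rpow_nhdsGT_zero {e : ℝ} (he : 0 < e) :
    Tendsto (fun t : ℝ => t ^ e) (𝓝[>] 0) (𝓝 0) := by
  have h := (continuousAt_rpow_const 0 e (Or.inr he.le)).tendsto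
  rw [zero_rpow he.ne'] at h
  exact h.mono_left nhdsWithin_le_nhds

/-- `F t ~ C * t ^ e` as `t → 0⁺`; `C = 0` is allowed and then means `F t = o(t ^ e)`. -/
def HasLeadingTerm (F : ℝ → ℝ) (C e : ℝ) : Prop :=
  Tendsto (fun t => F t / t ^ e) (𝓝[>] 0) (𝓝 C)

namespace HasLeadingTerm

variable {F G : ℝ → ℝ} {C C' e e' : ℝ}

lemma congr' (hF : HasLeadingTerm F C e) (hFG : F =ᶠ[𝓝[>] 0] G) : HasLeadingTerm G C e :=
  Tendsto.congr' (hFG.mono fun t ht => by simp only [ht]) hF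

lemma add (hF : HasLeadingTerm F C e) (hG : HasLeadingTerm G C' e) :
    HasLeadingTerm (F + G) (C + C') e := by
  simpa only [HasLeadingTerm, Pi.add_apply, add_div] using Tendsto.add hF hG

lemma neg (hF : HasLeadingTerm F C e) : HasLeadingTerm (-F) (-C) e := by
  simpa only [HasLeadingTerm, Pi.neg_apply, neg_div] using Tendsto.neg hF

lemma mul_tendsto {L : ℝ} (hF : HasLeadingTerm F C e) (hG : Tendsto G (𝓝[>] 0) (𝓝 L)) :
    HasLeadingTerm (F * G) (C * L) e :=
  (Tendsto.mul hF hG).congr fun t => by simp only [Pi.mul_apply, div_mul_eq_mul_div]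

lemma const_mul (c : ℝ) (hF : HasLeadingTerm F C e) :
    HasLeadingTerm (fun t => c * F t) (c * C) e := by
  simpa only [HasLeadingTerm, mul_div_assoc] using Tendsto.const_mul c hF

lemma of_lt (hF : HasLeadingTerm F C e) (he : e' < e) : HasLeadingTerm F 0 e' := by
  have h := Tendsto.mul hF (tendsto_rpow_nhdsGT_zero (sub_pos.2 he))
  rw [mul_zero] at h
  refine h.congr' ?_
  filter_upwards [self_mem_nhdsWithin] with t (ht : 0 < t)
  rw [rpow_sub ht]
  field_simp

lemma add_of_lt (hF : HasLeadingTerm F C e) (hG : HasLeadingTerm G C' e') (he : e < e') :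
    HasLeadingTerm (F + G) C e := by
  simpa only [add_zero] using hF.add (hG.of_lt he)

lemma tendsto_zero (hF : HasLeadingTerm F C e) (he : 0 < e) :
    Tendsto F (𝓝[>] 0) (𝓝 0) := by
  simpa only [HasLeadingTerm, rpow_zero, div_one] using hF.of_lt he

lemma eq_zero_of_lt (hF : HasLeadingTerm F C e) (hF' : HasLeadingTerm F C' e') (he : e < e') :
    C = 0 :=
  tendsto_nhds_unique hF (hF'.of_lt he)

lemma eq_zero_of_eventuallyEq_zero (hF : HasLeadingTerm F C e) (h0 : F =ᶠ[𝓝[>] 0] 0) :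
    C = 0 :=
  tendsto_nhds_unique hF (tendsto_const_nhds.congr' (h0.mono fun t ht => by simp [ht]))

lemma unique (hF : HasLeadingTerm F C e) (hF' : HasLeadingTerm F C' e') (hC : C ≠ 0)
    (hC' : C' ≠ 0) : e = e' ∧ C = C' := by
  rcases lt_trichotomy e e' with h | rfl | h
  · exact absurd (hF.eq_zero_of_lt hF' h) hC
  · exact ⟨rfl, tendsto_nhds_unique hF hF'⟩
  · exact absurd (hF'.eq_zero_of_lt hF h) hC'

lemma comp {w : ℝ → ℝ} {K q : ℝ} (hF : HasLeadingTerm F C e) (hw : HasLeadingTerm w K q)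
    (hK : 0 < K) (hq : 0 < q) (hw_pos : ∀ᶠ t in 𝓝[>] 0, 0 < w t) :
    HasLeadingTerm (F ∘ w) (C * K ^ e) (q * e) := by
  have hw' : Tendsto w (𝓝[>] 0) (𝓝[>] 0) :=
    tendsto_nhdsWithin_iff.2 ⟨hw.tendsto_zero hq, hw_pos⟩
  have hK' := (continuousAt_rpow_const K e (Or.inl hK.ne')).tendsto.comp hw
  have h := Tendsto.mul (Tendsto.comp hF hw') hK'
  refine h.congr' ?_
  filter_upwards [self_mem_nhdsWithin, hw_pos] with t (ht : 0 < t) hwt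
  have : w t ^ e ≠ 0 := (rpow_pos_of_pos hwt e).ne'
  simp only [Function.comp_apply]
  rw [div_rpow hwt.le (rpow_nonneg ht.le _), ← rpow_mul ht.le]
  field_simp

end HasLeadingTerm

lemma hasLeadingTerm_rpow (e : ℝ) : HasLeadingTerm (fun t => t ^ e) 1 e := by
  refine tendsto_const_nhds.congr' ?_
  filter_upwards [self_mem_nhdsWithin] with t (ht : 0 < t)
  exact (div_self (rpow_pos_of_pos ht e).ne').symm

lemma hasLeadingTerm_rpow_sub_rpow {e e' : ℝ} (he : e < e') :
    HasLeadingTerm (fun t => t ^ e - t ^ e') 1 e :=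
  ((hasLeadingTerm_rpow e).add_of_lt (hasLeadingTerm_rpow e').neg he).congr'
    (.of_forall fun _ => (sub_eq_add_neg _ _).symm)

lemma hasLeadingTerm_one_add_rpow_sub_one (r : ℝ) :
    HasLeadingTerm (fun u => (1 + u) ^ r - 1) r 1 := by
  have h := (hasDerivAt_iff_tendsto_slope_zero.1
    (hasDerivAt_rpow_const (x := 1) (p := r) (Or.inl one_ne_zero))).mono_left
    (nhdsWithin_mono 0 fun u (hu : 0 < u) => hu.ne')
  simp only [one_rpow, mul_one, smul_eq_mul] at h
  exact h.congr fun u => by rw [rpow_one, inv_mul_eq_div]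

lemma hasLeadingTerm_one_add_rpow_sub_one_sub_mul (r : ℝ) :
    HasLeadingTerm (fun u => (1 + u) ^ r - 1 - r * u) (r * (r - 1) / 2) 2 := by
  have hderiv : ∀ᶠ u in 𝓝[>] (0 : ℝ),
      HasDerivAt (fun u => (1 + u) ^ r - 1 - r * u) (r * (1 + u) ^ (r - 1) - r) u := by
    filter_upwards [self_mem_nhdsWithin] with u (hu : 0 < u)
    have h : HasDerivAt (fun u : ℝ => (1 + u) ^ r) (r * (1 + u) ^ (r - 1)) u := by
      simpa using ((hasDerivAt_id u).const_add 1).rpow_const (p := r) (Or.inl (by positivity))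
    exact ((h.sub_const 1).sub ((hasDerivAt_id u).const_mul r)).congr_deriv (by simp)
  have hnum : Tendsto (fun u : ℝ => (1 + u) ^ r - 1 - r * u) (𝓝[>] 0) (𝓝 0) := by
    have h : ContinuousAt (fun u : ℝ => (1 + u) ^ r - 1 - r * u) 0 := by
      have := continuousAt_rpow_const (1 + 0) r (Or.inl (by norm_num))
      fun_prop
    simpa using h.tendsto.mono_left nhdsWithin_le_nhds
  have hden : Tendsto (fun u : ℝ => u ^ 2) (𝓝[>] 0) (𝓝 0) := by
    simpa using ((continuous_pow 2).tendsto (0 : ℝ)).mono_left nhdsWithin_le_nhds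
  have hratio : Tendsto (fun u => (r * (1 + u) ^ (r - 1) - r) / (2 * u)) (𝓝[>] 0)
      (𝓝 (r * (r - 1) / 2)) := by
    have h := (hasLeadingTerm_one_add_rpow_sub_one (r - 1)).const_mul (r / 2)
    rw [HasLeadingTerm, show r / 2 * (r - 1) = r * (r - 1) / 2 by ring] at h
    refine h.congr' ?_
    filter_upwards [self_mem_nhdsWithin] with u (hu : 0 < u)
    rw [rpow_one]
    field_simp
  have h := HasDerivAt.lhopital_zero_nhdsGT hderiv
    (Eventually.of_forall fun u => by simpa using hasDerivAt_pow 2 u)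
    (by filter_upwards [self_mem_nhdsWithin] with u (hu : 0 < u); positivity) hnum hden
    (by simpa only [Nat.cast_ofNat, pow_one] using hratio)
  simpa only [HasLeadingTerm, rpow_two] using h

lemma hasLeadingTerm_rpow_sub_rpow_div {e e' s : ℝ} (he : e < e') (hs : 0 < s) :
    HasLeadingTerm (fun t => (t ^ e - t ^ e') / (1 - t ^ s)) 1 e := by
  have h := (hasLeadingTerm_rpow_sub_rpow he).mul_tendsto
    (((tendsto_rpow_nhdsGT_zero hs).const_sub 1).inv₀ (by norm_num))
  simp only [sub_zero, inv_one, mul_one] at h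
  exact h.congr' (.of_forall fun t => (div_eq_mul_inv _ _).symm)

lemma S_one_left (p q t : ℝ) :
    S p q 1 t = (q * (1 - t ^ p) / (p * (1 - t ^ q))) ^ (1 / (p - q)) := by
  simp [S]

lemma mul_one_sub_rpow_pos {p t : ℝ} (ht : t ∈ Ioo (0 : ℝ) 1) (hp : p ≠ 0) :
    0 < p * (1 - t ^ p) := by
  rcases hp.lt_or_gt with hp | hp
  · nlinarith [(one_lt_rpow_iff_of_pos ht.1).2 (Or.inr ⟨ht.2, hp⟩)]
  · nlinarith [rpow_lt_one ht.1.le ht.2 hp]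

lemma S_one_left_comm {p q t : ℝ} (ht : t ∈ Ioo (0 : ℝ) 1) (hp : p ≠ 0) (hq : q ≠ 0) :
    S q p 1 t = S p q 1 t := by
  have hp' := mul_one_sub_rpow_pos ht hp
  have hq' := mul_one_sub_rpow_pos ht hq
  have hbase : 0 < q * (1 - t ^ p) / (p * (1 - t ^ q)) := by
    have h1q : 1 - t ^ q ≠ 0 := right_ne_zero_of_mul hq'.ne'
    rw [show q * (1 - t ^ p) / (p * (1 - t ^ q))
      = p * (1 - t ^ p) / (q * (1 - t ^ q)) * (q / p) ^ 2 by field_simp]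
    exact mul_pos (div_pos hp' hq') (pow_two_pos_of_ne_zero (div_ne_zero hq hp))
  rw [S_one_left, S_one_left, ← inv_div, inv_rpow hbase.le, ← rpow_neg hbase.le]
  congr 1
  rw [← neg_sub, div_neg, neg_neg]

lemma S_two_one {x y : ℝ} (hxy : x ≠ y) : S 2 1 x y = (x + y) / 2 := by
  have h : x - y ≠ 0 := sub_ne_zero.2 hxy
  rw [S, rpow_two, rpow_two, rpow_one, rpow_one, show (1 : ℝ) / (2 - 1) = 1 by norm_num,
    rpow_one]
  field_simp
  ring

lemma S_one_two {x y : ℝ} (hxy : x ≠ y) : S 1 2 x y = (x + y) / 2 := by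
  have h : x - y ≠ 0 := sub_ne_zero.2 hxy
  rw [S, rpow_two, rpow_two, rpow_one, rpow_one, show (1 : ℝ) / (1 - 2) = -1 by norm_num,
    rpow_neg_one, show x ^ 2 - y ^ 2 = (x - y) * (x + y) by ring]
  field_simp

noncomputable def stolarskyLim (p q : ℝ) : ℝ := (q / p) ^ (1 / (p - q))

noncomputable def stolarskyExcess (p q t : ℝ) : ℝ := (t ^ q - t ^ p) / (1 - t ^ q)

section Positive

variable {p q : ℝ}

lemma stolarskyLim_pos (hq : 0 < q) (hqp : q < p) : 0 < stolarskyLim p q :=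
  rpow_pos_of_pos (div_pos hq (hq.trans hqp)) _

lemma stolarskyLim_lt_one (hq : 0 < q) (hqp : q < p) : stolarskyLim p q < 1 :=
  rpow_lt_one (div_pos hq (hq.trans hqp)).le ((div_lt_one (hq.trans hqp)).2 hqp)
    (one_div_pos.2 (sub_pos.2 hqp))

lemma stolarskyExcess_pos (hq : 0 < q) (hqp : q < p) {t : ℝ} (ht : t ∈ Ioo (0 : ℝ) 1) :
    0 < stolarskyExcess p q t :=
  div_pos (sub_pos.2 (rpow_lt_rpow_of_exponent_gt ht.1 ht.2 hqp))
    (sub_pos.2 (rpow_lt_one ht.1.le ht.2 hq))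

lemma S_one_left_eq (hq : 0 < q) (hqp : q < p) {t : ℝ} (ht : t ∈ Ioo (0 : ℝ) 1) :
    S p q 1 t = stolarskyLim p q * (1 + stolarskyExcess p q t) ^ (1 / (p - q)) := by
  have hp : 0 < p := hq.trans hqp
  have htq : 0 < 1 - t ^ q := sub_pos.2 (rpow_lt_one ht.1.le ht.2 hq)
  have hw : 1 + stolarskyExcess p q t = (1 - t ^ p) / (1 - t ^ q) := by
    rw [stolarskyExcess]
    field_simp
    ring
  have htp : 0 < 1 - t ^ p := sub_pos.2 (rpow_lt_one ht.1.le ht.2 hp)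
  rw [S_one_left, stolarskyLim, hw, ← mul_rpow (div_pos hq hp).le (div_pos htp htq).le,
    div_mul_div_comm]

lemma hasLeadingTerm_stolarskyExcess (hq : 0 < q) (hqp : q < p) :
    HasLeadingTerm (stolarskyExcess p q) 1 q :=
  hasLeadingTerm_rpow_sub_rpow_div hqp hq

lemma eventually_stolarskyExcess_pos (hq : 0 < q) (hqp : q < p) :
    ∀ᶠ t in 𝓝[>] 0, 0 < stolarskyExcess p q t := by
  filter_upwards [Ioo_mem_nhdsGT one_pos] with t ht using stolarskyExcess_pos hq hqp ht

lemma hasLeadingTerm_S_one_left_sub (hq : 0 < q) (hqp : q < p) :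
    HasLeadingTerm (fun t => S p q 1 t - stolarskyLim p q) (stolarskyLim p q / (p - q)) q := by
  have h := ((hasLeadingTerm_one_add_rpow_sub_one (1 / (p - q))).comp
    (hasLeadingTerm_stolarskyExcess hq hqp) one_pos hq
    (eventually_stolarskyExcess_pos hq hqp)).const_mul (stolarskyLim p q)
  rw [one_rpow, mul_one, mul_one, mul_one_div] at h
  refine h.congr' ?_
  filter_upwards [Ioo_mem_nhdsGT one_pos] with t ht
  rw [Function.comp_apply, S_one_left_eq hq hqp ht]
  ring

lemma tendsto_S_one_left (hq : 0 < q) (hqp : q < p) :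
    Tendsto (fun t => S p q 1 t) (𝓝[>] 0) (𝓝 (stolarskyLim p q)) := by
  simpa using ((hasLeadingTerm_S_one_left_sub hq hqp).tendsto_zero hq).add_const
    (stolarskyLim p q)

end Positive

lemma tendsto_S_one_left_of_neg {p q : ℝ} (hq : q < 0) (hqp : q < p) (hp : p ≠ 0) :
    Tendsto (fun t => S p q 1 t) (𝓝[>] 0) (𝓝 0) := by
  -- multiplying numerator and denominator of the base by `t ^ (-q)` makes both bounded
  have hnum : Tendsto (fun t : ℝ => t ^ (-q) - t ^ (p - q)) (𝓝[>] 0) (𝓝 0) := by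
    simpa using (tendsto_rpow_nhdsGT_zero (neg_pos.2 hq)).sub
      (tendsto_rpow_nhdsGT_zero (sub_pos.2 hqp))
  have hden : Tendsto (fun t : ℝ => t ^ (-q) - 1) (𝓝[>] 0) (𝓝 (-1)) := by
    simpa using (tendsto_rpow_nhdsGT_zero (neg_pos.2 hq)).sub_const 1
  have hbase : Tendsto (fun t => q / p * ((t ^ (-q) - t ^ (p - q)) / (t ^ (-q) - 1)))
      (𝓝[>] 0) (𝓝 0) := by
    simpa using (hnum.div hden (by norm_num)).const_mul (q / p)
  have hpow := (continuousAt_rpow_const 0 (1 / (p - q))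
    (Or.inr (one_div_pos.2 (sub_pos.2 hqp)).le)).tendsto.comp hbase
  rw [zero_rpow (one_div_pos.2 (sub_pos.2 hqp)).ne'] at hpow
  refine hpow.congr' ?_
  filter_upwards [Ioo_mem_nhdsGT one_pos] with t ht
  have htq : t ^ q ≠ 0 := (rpow_pos_of_pos ht.1 q).ne'
  have htq' : 1 - t ^ q ≠ 0 := (sub_neg.2 (one_lt_rpow_of_pos_of_lt_one_of_neg ht.1 ht.2 hq)).ne
  have htq'' : (t ^ q)⁻¹ - 1 ≠ 0 := by
    rw [← rpow_neg ht.1.le]; exact (sub_neg.2 (rpow_lt_one ht.1.le ht.2 (neg_pos.2 hq))).ne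
  rw [Function.comp_apply, S_one_left, rpow_sub ht.1, rpow_neg ht.1.le]
  congr 1
  field_simp

noncomputable def stolarskyRem (p t : ℝ) : ℝ :=
  S p 1 1 t - stolarskyLim p 1 - stolarskyLim p 1 / (p - 1) * t

section Remainder

variable {p : ℝ}

lemma stolarskyRem_eq (hp : 1 < p) {t : ℝ} (ht : t ∈ Ioo (0 : ℝ) 1) :
    stolarskyRem p t =
      stolarskyLim p 1 * ((1 + stolarskyExcess p 1 t) ^ (1 / (p - 1)) - 1
        - 1 / (p - 1) * stolarskyExcess p 1 t)
      + stolarskyLim p 1 / (p - 1) * ((t ^ (2 : ℝ) - t ^ p) / (1 - t ^ (1 : ℝ))) := by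
  have ht1 : 1 - t ≠ 0 := (sub_pos.2 ht.2).ne'
  rw [stolarskyRem, S_one_left_eq one_pos hp ht, stolarskyExcess, rpow_one, rpow_two]
  field_simp
  ring

lemma hasLeadingTerm_stolarskyRem_quadratic (hp : 1 < p) :
    HasLeadingTerm (fun t => stolarskyLim p 1 * ((1 + stolarskyExcess p 1 t) ^ (1 / (p - 1)) - 1
        - 1 / (p - 1) * stolarskyExcess p 1 t))
      (stolarskyLim p 1 * (1 / (p - 1) * (1 / (p - 1) - 1) / 2)) 2 := by
  have h := (hasLeadingTerm_one_add_rpow_sub_one_sub_mul (1 / (p - 1))).comp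
    (hasLeadingTerm_stolarskyExcess one_pos hp) one_pos one_pos
    (eventually_stolarskyExcess_pos one_pos hp)
  rw [one_rpow, mul_one, one_mul] at h
  exact h.const_mul _

lemma hasLeadingTerm_stolarskyRem_of_lt_two (hp : 1 < p) (hp2 : p < 2) :
    HasLeadingTerm (stolarskyRem p) (-(stolarskyLim p 1 / (p - 1))) p := by
  have hlin := ((hasLeadingTerm_rpow_sub_rpow_div hp2 one_pos).neg).const_mul
    (stolarskyLim p 1 / (p - 1))
  rw [mul_neg_one] at hlin
  refine (hlin.add_of_lt (hasLeadingTerm_stolarskyRem_quadratic hp) hp2).congr' ?_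
  filter_upwards [Ioo_mem_nhdsGT one_pos] with t ht
  rw [stolarskyRem_eq hp ht, Pi.add_apply, Pi.neg_apply, add_comm, ← neg_div, neg_sub]

lemma hasLeadingTerm_stolarskyRem_of_two_lt (hp : 2 < p) :
    HasLeadingTerm (stolarskyRem p)
      (stolarskyLim p 1 / (p - 1) * (1 / (p - 1) + 1) / 2) 2 := by
  have hp1 : 1 < p := by linarith
  have hlin := (hasLeadingTerm_rpow_sub_rpow_div hp one_pos).const_mul
    (stolarskyLim p 1 / (p - 1))
  have h := (hasLeadingTerm_stolarskyRem_quadratic hp1).add hlin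
  rw [show stolarskyLim p 1 * (1 / (p - 1) * (1 / (p - 1) - 1) / 2)
      + stolarskyLim p 1 / (p - 1) * 1
      = stolarskyLim p 1 / (p - 1) * (1 / (p - 1) + 1) / 2 by ring] at h
  refine h.congr' ?_
  filter_upwards [Ioo_mem_nhdsGT one_pos] with t ht
  rw [stolarskyRem_eq hp1 ht, Pi.add_apply]

lemma stolarskyRem_two {t : ℝ} (ht : t ∈ Ioo (0 : ℝ) 1) : stolarskyRem 2 t = 0 := by
  rw [stolarskyRem, S_two_one ht.2.ne', stolarskyLim]
  norm_num
  ring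

lemma exists_hasLeadingTerm_stolarskyRem (hp : 1 < p) (hp2 : p ≠ 2) :
    ∃ C, 0 < (p - 2) * C ∧ HasLeadingTerm (stolarskyRem p) C (min p 2) := by
  have hκ : 0 < stolarskyLim p 1 / (p - 1) :=
    div_pos (stolarskyLim_pos one_pos hp) (sub_pos.2 hp)
  rcases hp2.lt_or_gt with hp2 | hp2
  · rw [min_eq_left hp2.le]
    refine ⟨_, ?_, hasLeadingTerm_stolarskyRem_of_lt_two hp hp2⟩
    nlinarith
  · rw [min_eq_right hp2.le]
    refine ⟨_, ?_, hasLeadingTerm_stolarskyRem_of_two_lt hp2⟩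
    have : 0 < 1 / (p - 1) + 1 := by positivity
    have : 0 < p - 2 := by linarith
    positivity

lemma eq_two_of_stolarskyRem_eq_zero (hp : 1 < p)
    (h0 : ∀ t ∈ Ioo (0 : ℝ) 1, stolarskyRem p t = 0) : p = 2 := by
  by_contra hp2
  obtain ⟨C, hC, hR⟩ := exists_hasLeadingTerm_stolarskyRem hp hp2
  have : C = 0 := hR.eq_zero_of_eventuallyEq_zero <| by
    filter_upwards [Ioo_mem_nhdsGT one_pos] with t ht using h0 t ht
  simp [this] at hC

end Remainder

lemma eq_two_of_stolarskyRem_add_eq_zero {a c : ℝ} (ha : 1 < a) (hc : 1 < c)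
    (h0 : ∀ t ∈ Ioo (0 : ℝ) 1, stolarskyRem a t + stolarskyRem c t = 0) :
    a = 2 ∧ c = 2 := by
  by_cases ha2 : a = 2
  · subst ha2
    exact ⟨rfl, eq_two_of_stolarskyRem_eq_zero hc fun t ht => by
      simpa [stolarskyRem_two ht] using h0 t ht⟩
  by_cases hc2 : c = 2
  · subst hc2
    exact ⟨eq_two_of_stolarskyRem_eq_zero ha fun t ht => by
      simpa [stolarskyRem_two ht] using h0 t ht, rfl⟩
  exfalso
  obtain ⟨A, hA, hRa⟩ := exists_hasLeadingTerm_stolarskyRem ha ha2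
  obtain ⟨C, hC, hRc⟩ := exists_hasLeadingTerm_stolarskyRem hc hc2
  have hRa' : HasLeadingTerm (stolarskyRem a) (-C) (min c 2) := hRc.neg.congr' <| by
    filter_upwards [Ioo_mem_nhdsGT one_pos] with t ht
    simp [eq_neg_of_add_eq_zero_left (h0 t ht)]
  obtain ⟨he, hAC⟩ := hRa.unique hRa' (by rintro rfl; simp at hA)
    (neg_ne_zero.2 (by rintro rfl; simp at hC))
  subst hAC
  rcases lt_or_gt_of_ne ha2 with ha2 | ha2 <;> rcases lt_or_gt_of_ne hc2 with hc2 | hc2 <;>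
    simp only [min_eq_left, min_eq_right, ha2.le, hc2.le] at he
  · subst he; linarith
  · linarith
  · linarith
  · nlinarith

lemma log_sub_log_eq_of_stolarskyLim_eq {p q : ℝ} (hq : 0 < q) (hqp : q < p)
    (h : stolarskyLim p q = p - q) : log q - log p = (p - q) * log (p - q) := by
  have hp : 0 < p := hq.trans hqp
  have hpq : p - q ≠ 0 := (sub_pos.2 hqp).ne'
  have hlog := congrArg log h
  rw [stolarskyLim, log_rpow (div_pos hq hp), log_div hq.ne' hp.ne'] at hlog
  field_simp at hlog
  linarith

lemma stolarskyLim_add_ne_one {a c : ℝ} (ha : 1 < a) (ha2 : a < 2) (hac : a < c)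
    (h1 : stolarskyLim a 1 / (a - 1) = 1) (h2 : stolarskyLim c a / (c - a) = 1) :
    stolarskyLim a 1 + stolarskyLim c a ≠ 1 := by
  intro hsum
  rw [div_eq_one_iff_eq (sub_pos.2 ha).ne'] at h1
  rw [div_eq_one_iff_eq (sub_pos.2 hac).ne'] at h2
  have hc : c = 2 := by linarith
  subst hc
  have hlog1 := log_sub_log_eq_of_stolarskyLim_eq one_pos ha h1
  have hlog2 := log_sub_log_eq_of_stolarskyLim_eq (by linarith) hac h2
  rw [log_one] at hlog1
  have hent : binEntropy (a - 1) = log 2 := by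
    rw [binEntropy, log_inv, log_inv, show 1 - (a - 1) = 2 - a by ring]
    linarith
  have ha32 : a = 3 / 2 := by
    rw [binEntropy_eq_log_two] at hent
    linarith
  subst ha32
  norm_num [stolarskyLim, rpow_two] at h1

lemma not_hasLeadingTerm_stolarskyRem {a c d : ℝ} (ha : 1 < a) (hd : 1 < d) (hdc : d < c)
    (hκ : stolarskyLim a 1 / (a - 1) = 1) (hsum : stolarskyLim a 1 + stolarskyLim c d = 1) :
    ¬ HasLeadingTerm (stolarskyRem a) (-(stolarskyLim c d / (c - d))) d := by
  intro hR
  have hκc : 0 < stolarskyLim c d / (c - d) :=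
    div_pos (stolarskyLim_pos (by linarith) hdc) (sub_pos.2 hdc)
  rcases lt_trichotomy a 2 with ha2 | rfl | ha2
  · obtain ⟨rfl, hκ'⟩ := (hasLeadingTerm_stolarskyRem_of_lt_two ha ha2).unique hR
      (by rw [hκ]; norm_num) (neg_ne_zero.2 hκc.ne')
    exact stolarskyLim_add_ne_one ha ha2 hdc hκ (by linarith) hsum
  · norm_num [stolarskyLim] at hκ
  · have hpos : 0 < stolarskyLim a 1 / (a - 1) * (1 / (a - 1) + 1) / 2 := by
      have := sub_pos.2 ha
      rw [hκ]; positivity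
    obtain ⟨-, hC⟩ := (hasLeadingTerm_stolarskyRem_of_two_lt ha2).unique hR hpos.ne'
      (neg_ne_zero.2 hκc.ne')
    linarith

section SumEq

variable {a b c d : ℝ}

lemma pos_of_tendsto_S_one_left_add (hba : b < a) (hdc : d < c) (ha : a ≠ 0)
    (hb : b ≠ 0) (hc : c ≠ 0) (hd : d ≠ 0)
    (hsum : Tendsto (fun t => S a b 1 t + S c d 1 t) (𝓝[>] 0) (𝓝 1)) : 0 < b := by
  refine hb.lt_or_gt.resolve_left fun hb => ?_
  have hA := tendsto_S_one_left_of_neg hb hba ha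
  rcases hd.lt_or_gt with hd | hd
  · have := tendsto_nhds_unique hsum (hA.add (tendsto_S_one_left_of_neg hd hdc hc))
    norm_num at this
  · have := tendsto_nhds_unique hsum (hA.add (tendsto_S_one_left hd hdc))
    linarith [stolarskyLim_lt_one hd hdc]

lemma eq_of_S_one_left_add_eq_of_lt (hba : b < a) (hdc : d < c) (hbd : b ≤ d) (ha : a ≠ 0)
    (hb : b ≠ 0) (hc : c ≠ 0) (hd : d ≠ 0)
    (heq : ∀ t ∈ Ioo (0 : ℝ) 1, S a b 1 t + S c d 1 t = 1 + t) :
    a = 2 ∧ b = 1 ∧ c = 2 ∧ d = 1 := by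
  have hsum : Tendsto (fun t => S a b 1 t + S c d 1 t) (𝓝[>] 0) (𝓝 1) := by
    have h : Tendsto (fun t : ℝ => 1 + t) (𝓝[>] 0) (𝓝 1) := by
      simpa using (tendsto_nhdsWithin_of_tendsto_nhds
        (tendsto_id (x := 𝓝 (0 : ℝ)))).const_add 1
    exact h.congr' (by filter_upwards [Ioo_mem_nhdsGT one_pos] with t ht using (heq t ht).symm)
  have hb0 : 0 < b := pos_of_tendsto_S_one_left_add hba hdc ha hb hc hd hsum
  have hd0 : 0 < d := hb0.trans_le hbd
  have hαβ : stolarskyLim a b + stolarskyLim c d = 1 :=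
    tendsto_nhds_unique ((tendsto_S_one_left hb0 hba).add (tendsto_S_one_left hd0 hdc)) hsum
  have hA := hasLeadingTerm_S_one_left_sub hb0 hba
  have hC := hasLeadingTerm_S_one_left_sub hd0 hdc
  have hκa := div_pos (stolarskyLim_pos hb0 hba) (sub_pos.2 hba)
  have hκc := div_pos (stolarskyLim_pos hd0 hdc) (sub_pos.2 hdc)
  have hdev : ∀ t ∈ Ioo (0 : ℝ) 1,
      (S a b 1 t - stolarskyLim a b) + (S c d 1 t - stolarskyLim c d) = t := by
    intro t ht
    linarith [heq t ht]
  have hid : HasLeadingTerm (fun t => (S a b 1 t - stolarskyLim a b)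
      + (S c d 1 t - stolarskyLim c d)) 1 1 := by
    refine (hasLeadingTerm_rpow 1).congr' ?_
    filter_upwards [Ioo_mem_nhdsGT one_pos] with t ht
    rw [rpow_one, hdev t ht]
  rcases hbd.lt_or_eq with hbd | rfl
  · obtain ⟨rfl, hκ⟩ := (hA.add_of_lt hC hbd).unique hid hκa.ne' one_ne_zero
    refine absurd ?_ (not_hasLeadingTerm_stolarskyRem hba hbd hdc hκ hαβ)
    refine hC.neg.congr' ?_
    filter_upwards [Ioo_mem_nhdsGT one_pos] with t ht
    simp only [Pi.neg_apply, stolarskyRem]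
    linear_combination -hdev t ht + t * hκ
  · obtain ⟨rfl, hκ⟩ := (hA.add hC).unique hid (add_pos hκa hκc).ne' one_ne_zero
    obtain ⟨rfl, rfl⟩ := eq_two_of_stolarskyRem_add_eq_zero hba hdc fun t ht => by
      simp only [stolarskyRem]
      linear_combination hdev t ht - t * hκ
    exact ⟨rfl, rfl, rfl, rfl⟩

end SumEq

lemma eq_of_S_one_left_add_eq {a b c d : ℝ} (hab : a ≠ b) (hcd : c ≠ d) (ha : a ≠ 0)
    (hb : b ≠ 0) (hc : c ≠ 0) (hd : d ≠ 0)
    (heq : ∀ t ∈ Ioo (0 : ℝ) 1, S a b 1 t + S c d 1 t = 1 + t) :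
    ((a = 2 ∧ b = 1) ∨ (a = 1 ∧ b = 2)) ∧ ((c = 2 ∧ d = 1) ∨ (c = 1 ∧ d = 2)) := by
  wlog hba : b < a generalizing a b
  · have := this hab.symm hb ha (fun t ht => by rw [S_one_left_comm ht ha hb]; exact heq t ht)
      (lt_of_le_of_ne (not_lt.1 hba) hab)
    tauto
  wlog hdc : d < c generalizing c d
  · have := this hcd.symm hd hc (fun t ht => by rw [S_one_left_comm ht hc hd]; exact heq t ht)
      (lt_of_le_of_ne (not_lt.1 hdc) hcd)
    tauto
  wlog hbd : b ≤ d generalizing a b c d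
  · exact (this hcd hc hd hdc hab ha hb (fun t ht => by rw [add_comm]; exact heq t ht) hba
      (le_of_not_ge hbd)).symm
  obtain ⟨rfl, rfl, rfl, rfl⟩ := eq_of_S_one_left_add_eq_of_lt hba hdc hbd ha hb hc hd heq
  norm_num

lemma Sfull_eq_add_div_two {p q : ℝ} (h : (p = 2 ∧ q = 1) ∨ (p = 1 ∧ q = 2)) (x y : ℝ) :
    Sfull p q x y = (x + y) / 2 := by
  unfold Sfull
  split_ifs with hxy
  · rw [hxy]; ring
  · rcases h with ⟨rfl, rfl⟩ | ⟨rfl, rfl⟩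
    exacts [S_two_one hxy, S_one_two hxy]

theorem matkowski_suto (a b c d : ℝ) (hab : a * b * (a - b) ≠ 0)
    (hcd : c * d * (c - d) ≠ 0) :
    (∀ x y : ℝ, 0 < x → 0 < y → Sfull a b x y + Sfull c d x y = x + y) ↔
      ((a = 2 ∧ b = 1) ∨ (a = 1 ∧ b = 2)) ∧
      ((c = 2 ∧ d = 1) ∨ (c = 1 ∧ d = 2)) := by
  obtain ⟨⟨ha, hb⟩, hab⟩ := mul_ne_zero_iff.1 hab |>.imp_left mul_ne_zero_iff.1
  obtain ⟨⟨hc, hd⟩, hcd⟩ := mul_ne_zero_iff.1 hcd |>.imp_left mul_ne_zero_iff.1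
  constructor
  · intro h
    refine eq_of_S_one_left_add_eq (sub_ne_zero.1 hab) (sub_ne_zero.1 hcd) ha hb hc hd
      fun t ht => ?_
    simpa [Sfull, ht.2.ne'] using h 1 t one_pos ht.1
  · rintro ⟨h₁, h₂⟩ x y - -
    rw [Sfull_eq_add_div_two h₁, Sfull_eq_add_div_two h₂]
    ring
end

section
/- If a, b, c, d ∈ ℝ satisfy S_{a,b}(x,y) = S_{c,d}(x,y) for all positive x, y, with ab(a−b) ≠ 0 and cd(c−d) ≠ 0, then either a + b = c + d = 0 (both means are the geometric mean) or {a,b} = {c,d}. -/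
open Real

/-!
With `L u = log ((eᵘ - 1) / u)` one has `S_{p,q}(eᵗ, 1) = exp ((L (p t) - L (q t)) / (p - q))`,
so equality of the two means gives `(c - d) (L (a t) - L (b t)) = (a - b) (L (c t) - L (d t))`
for `t > 0`. `L` is analytic, so differentiating `n` times at `t = 0` yields
`(c - d) (aⁿ - bⁿ) = (a - b) (cⁿ - dⁿ)` whenever `L⁽ⁿ⁾(0) ≠ 0`, which is the case for `n = 2`
and `n = 4`. Divided by `(a - b) (c - d)` these read `a + b = c + d` and
`(a + b) (a² + b²) = (c + d) (c² + d²)`: either both sums vanish, or the pairs have the same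
sum and the same product.
-/

namespace Stolarsky

open Set Filter Topology
open scoped ContDiff

/-- `u ↦ (eᵘ - 1) / u`, extended by `1` at `0`. -/
noncomputable def expSlope : ℝ → ℝ := dslope exp 0

lemma mul_expSlope (u : ℝ) : u * expSlope u = exp u - 1 := by
  simpa [expSlope] using sub_smul_dslope exp 0 u

lemma expSlope_zero : expSlope 0 = 1 := by
  simp [expSlope, dslope_same]

lemma expSlope_of_ne {u : ℝ} (hu : u ≠ 0) : expSlope u = (exp u - 1) / u := by
  rw [eq_div_iff hu, mul_comm, mul_expSlope]

lemma expSlope_pos (u : ℝ) : 0 < expSlope u := by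
  rcases lt_trichotomy u 0 with hu | rfl | hu
  · rw [expSlope_of_ne hu.ne]
    exact div_pos_of_neg_of_neg (by linarith [exp_lt_one_iff.mpr hu]) hu
  · simp [expSlope_zero]
  · rw [expSlope_of_ne hu.ne']
    exact div_pos (by linarith [add_one_lt_exp hu.ne']) hu

lemma analyticAt_expSlope (u : ℝ) : AnalyticAt ℝ expSlope u := by
  rcases eq_or_ne u 0 with rfl | hu
  · obtain ⟨p, hp⟩ := analyticAt_rexp (x := 0)
    exact ⟨_, hp.has_fpower_series_dslope_fslope⟩
  · have h : (fun v => (exp v - 1) / v) =ᶠ[𝓝 u] expSlope :=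
      (eventually_ne_nhds hu).mono fun v hv => (expSlope_of_ne hv).symm
    exact ((analyticAt_rexp.sub analyticAt_const).div analyticAt_id hu).congr h

lemma contDiff_expSlope : ContDiff ℝ ∞ expSlope :=
  contDiff_iff_contDiffAt.mpr fun u => (analyticAt_expSlope u).contDiffAt

lemma iteratedDeriv_expSlope_zero (k : ℕ) : iteratedDeriv k expSlope 0 = 1 / (k + 1) := by
  have h : ((k : ℝ) + 1) * iteratedDeriv k expSlope 0 = 1 := by
    have := congrArg (iteratedDeriv (k + 1) · 0) (funext mul_expSlope)
    rw [iteratedDeriv_fun_mul (f := fun u => u) contDiff_id.contDiffAt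
        (contDiff_infty.mp contDiff_expSlope _).contDiffAt,
      iteratedDeriv_fun_sub contDiff_exp.contDiffAt contDiff_const.contDiffAt] at this
    simpa [iteratedDeriv_fun_id_zero, iteratedDeriv_const, iteratedDeriv_eq_iterate] using this
  rw [eq_div_iff (by positivity), mul_comm, h]

noncomputable def logExpSlope (u : ℝ) : ℝ := log (expSlope u)

lemma contDiff_logExpSlope : ContDiff ℝ ∞ logExpSlope :=
  contDiff_expSlope.log fun u => (expSlope_pos u).ne'

lemma deriv_expSlope : deriv expSlope = fun u => deriv logExpSlope u * expSlope u := by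
  funext u
  have hd := (contDiff_expSlope.differentiable (by simp) u).hasDerivAt
  rw [show logExpSlope = fun v => log (expSlope v) from rfl, (hd.log (expSlope_pos u).ne').deriv,
    div_mul_cancel₀ _ (expSlope_pos u).ne']

lemma iteratedDeriv_succ_expSlope (k : ℕ) (u : ℝ) :
    iteratedDeriv (k + 1) expSlope u = ∑ i ∈ Finset.range (k + 1),
      k.choose i * iteratedDeriv (i + 1) logExpSlope u * iteratedDeriv (k - i) expSlope u := by
  have hL : ContDiff ℝ ∞ (deriv logExpSlope) := contDiff_logExpSlope.iterate_deriv 1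
  rw [iteratedDeriv_succ', deriv_expSlope, iteratedDeriv_fun_mul (contDiff_infty.mp hL _).contDiffAt
    (contDiff_infty.mp contDiff_expSlope _).contDiffAt]
  simp only [← iteratedDeriv_succ']

lemma iteratedDeriv_logExpSlope_zero :
    iteratedDeriv 2 logExpSlope 0 = 1 / 12 ∧ iteratedDeriv 4 logExpSlope 0 = -1 / 120 := by
  -- Leibniz's rule for expSlope = exp ∘ logExpSlope at orders 1 to 4 successively yields
  -- L'(0) = 1/2, L''(0) = 1/12, L'''(0) = 0 and L⁗(0) = -1/120.
  have h0 := iteratedDeriv_succ_expSlope 0 0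
  have h1 := iteratedDeriv_succ_expSlope 1 0
  have h2 := iteratedDeriv_succ_expSlope 2 0
  have h3 := iteratedDeriv_succ_expSlope 3 0
  norm_num [Finset.sum_range_succ, iteratedDeriv_expSlope_zero, Nat.choose] at h0 h1 h2 h3
  constructor <;> linarith

lemma iteratedDeriv_eq_of_eqOn_Ioi {n : ℕ} {f g : ℝ → ℝ} (hf : ContDiff ℝ n f)
    (hg : ContDiff ℝ n g) {a : ℝ} (h : EqOn f g (Ioi a)) :
    iteratedDeriv n f a = iteratedDeriv n g a := by
  have hIoi : EqOn (iteratedDeriv n f) (iteratedDeriv n g) (Ioi a) := fun t ht =>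
    (eventuallyEq_of_mem (isOpen_Ioi.mem_nhds ht) h).iteratedDeriv_eq n
  refine hIoi.closure (hf.continuous_iteratedDeriv n le_rfl)
    (hg.continuous_iteratedDeriv n le_rfl) ?_
  simp

lemma sub_pow_mul_iteratedDeriv_eq {n : ℕ} {f : ℝ → ℝ} (hf : ContDiff ℝ n f) {a b c d : ℝ}
    (h : ∀ t, 0 < t → (c - d) * (f (a * t) - f (b * t)) = (a - b) * (f (c * t) - f (d * t))) :
    (c - d) * (a ^ n - b ^ n) * iteratedDeriv n f 0
      = (a - b) * (c ^ n - d ^ n) * iteratedDeriv n f 0 := by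
  have hscale (p : ℝ) : ContDiff ℝ n fun t => f (p * t) :=
    hf.comp (contDiff_const.mul contDiff_id)
  have key := iteratedDeriv_eq_of_eqOn_Ioi (contDiff_const.mul ((hscale a).sub (hscale b)))
    (contDiff_const.mul ((hscale c).sub (hscale d))) h
  simp only [iteratedDeriv_const_mul_field] at key
  rw [iteratedDeriv_fun_sub (hscale a).contDiffAt (hscale b).contDiffAt,
    iteratedDeriv_fun_sub (hscale c).contDiffAt (hscale d).contDiffAt] at key
  simp only [iteratedDeriv_comp_const_mul hf, mul_zero] at key
  linear_combination key

lemma S_exp_one {p q : ℝ} (hp : p ≠ 0) (hq : q ≠ 0) {t : ℝ} (ht : t ≠ 0) :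
    S p q (exp t) 1 = exp ((logExpSlope (p * t) - logExpSlope (q * t)) / (p - q)) := by
  have hpow (r : ℝ) : exp t ^ r = exp (r * t) := by rw [← exp_mul, mul_comm]
  have hratio : q * (exp (p * t) - 1) / (p * (exp (q * t) - 1))
      = expSlope (p * t) / expSlope (q * t) := by
    rw [← mul_expSlope, ← mul_expSlope, div_eq_div_iff (by simp [*, (expSlope_pos _).ne'])
      (expSlope_pos _).ne']
    ring
  rw [S, hpow, hpow, one_rpow, one_rpow, hratio, rpow_def_of_pos (div_pos (expSlope_pos _)
    (expSlope_pos _)), log_div (expSlope_pos _).ne' (expSlope_pos _).ne', ← div_eq_mul_one_div]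
  rfl

lemma logExpSlope_sub_eq_of_Sfull_eq {a b c d : ℝ} (ha : a ≠ 0) (hb : b ≠ 0) (hab : a ≠ b)
    (hc : c ≠ 0) (hd : d ≠ 0) (hcd : c ≠ d)
    (h : ∀ x y : ℝ, 0 < x → 0 < y → Sfull a b x y = Sfull c d x y)
    {t : ℝ} (ht : 0 < t) :
    (c - d) * (logExpSlope (a * t) - logExpSlope (b * t))
      = (a - b) * (logExpSlope (c * t) - logExpSlope (d * t)) := by
  have hne : exp t ≠ 1 := (one_lt_exp_iff.mpr ht).ne'
  have heq := h (exp t) 1 (exp_pos t) one_pos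
  rw [Sfull, Sfull, if_neg hne, if_neg hne, S_exp_one ha hb ht.ne',
    S_exp_one hc hd ht.ne', exp_eq_exp, div_eq_div_iff (sub_ne_zero.mpr hab)
    (sub_ne_zero.mpr hcd)] at heq
  linear_combination heq

lemma sum_eq_zero_or_eq_or_swap {a b c d : ℝ} (hab : a ≠ b) (hcd : c ≠ d)
    (h2 : (c - d) * (a ^ 2 - b ^ 2) = (a - b) * (c ^ 2 - d ^ 2))
    (h4 : (c - d) * (a ^ 4 - b ^ 4) = (a - b) * (c ^ 4 - d ^ 4)) :
    (a + b = 0 ∧ c + d = 0) ∨ ((a = c ∧ b = d) ∨ (a = d ∧ b = c)) := by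
  have hne : (a - b) * (c - d) ≠ 0 := mul_ne_zero (sub_ne_zero.mpr hab) (sub_ne_zero.mpr hcd)
  have hsum : a + b = c + d := by
    have : (a - b) * (c - d) * ((a + b) - (c + d)) = 0 := by linear_combination h2
    linarith [(mul_eq_zero.mp this).resolve_left hne]
  have hcube : (a + b) * (a ^ 2 + b ^ 2) = (c + d) * (c ^ 2 + d ^ 2) := by
    have : (a - b) * (c - d) * ((a + b) * (a ^ 2 + b ^ 2) - (c + d) * (c ^ 2 + d ^ 2)) = 0 := by
      linear_combination h4
    linarith [(mul_eq_zero.mp this).resolve_left hne]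
  by_cases hs0 : a + b = 0
  · exact Or.inl ⟨hs0, hsum ▸ hs0⟩
  right
  have hsq : a ^ 2 + b ^ 2 = c ^ 2 + d ^ 2 := by
    rw [hsum] at hcube
    exact mul_left_cancel₀ (hsum ▸ hs0) hcube
  -- equal sums and products, so `a` is a root of `(x - c) (x - d)`
  have hroots : (a - c) * (a - d) = 0 := by
    linear_combination (a - (a + b + c + d) / 2) * hsum + hsq / 2
  rcases mul_eq_zero.mp hroots with h | h
  · exact Or.inl ⟨by linarith, by linarith⟩
  · exact Or.inr ⟨by linarith, by linarith⟩

end Stolarsky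

open Stolarsky in
theorem stolarsky_equality_characterization (a b c d : ℝ)
    (hab : a * b * (a - b) ≠ 0) (hcd : c * d * (c - d) ≠ 0)
    (h : ∀ x y : ℝ, 0 < x → 0 < y → Sfull a b x y = Sfull c d x y) :
    (a + b = 0 ∧ c + d = 0) ∨ ((a = c ∧ b = d) ∨ (a = d ∧ b = c)) := by
  simp only [mul_ne_zero_iff, sub_ne_zero] at hab hcd
  obtain ⟨⟨ha, hb⟩, hab⟩ := hab
  obtain ⟨⟨hc, hd⟩, hcd⟩ := hcd
  have hmoment (n : ℕ) := sub_pow_mul_iteratedDeriv_eq (contDiff_infty.mp contDiff_logExpSlope n)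
    fun t ht => logExpSlope_sub_eq_of_Sfull_eq ha hb hab hc hd hcd h ht
  obtain ⟨h2, h4⟩ := iteratedDeriv_logExpSlope_zero
  refine sum_eq_zero_or_eq_or_swap hab hcd ?_ ?_
  · simpa [h2] using hmoment 2
  · simpa [h4] using hmoment 4
end
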